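/- arXiv:2603.06813 — 3 statements merged into one kernel-verified Lean document; each statement's English description precedes it below -/
import Mathlib

section
/- Let Σ and Σ' be types, φ : Σ → Σ' a map (abstraction), and let S be a nonempty set of lists over Σ each of length at most H. Suppose there is an abstract symbol σ ∈ Σ' such that σ is a member of List.map φ τ for every τ ∈ S. Then Core_φ(S), the set of ⪯-maximal lists u over Σ' satisfying u ⪯ List.map φ τ for all τ ∈ S, is nonempty. -/
/-- `Core_φ S`: the set of `⪯`-maximal lists `u` over the abstract alphabet
satisfying `u ⪯ List.map φ τ` for every `τ ∈ S`. -/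
def CoreAbs {α β : Type*} (φ : α → β) (S : Set (List α)) : Set (List β) :=
  {u | (∀ τ ∈ S, u.Sublist (τ.map φ)) ∧
       ∀ v, (∀ τ ∈ S, v.Sublist (τ.map φ)) → u.Sublist v → u = v}

/-- Theorem 1 (existence of the invariant core, abstraction case):
if `S` is a nonempty set of lists each of length at most `H`, and some abstract
symbol `σ` belongs to `List.map φ τ` for every `τ ∈ S`, then `Core_φ S` is nonempty. -/
theorem coreAbs_nonempty {α β : Type*} (φ : α → β) (H : ℕ) (S : Set (List α))
    (hS : S.Nonempty) (hlen : ∀ τ ∈ S, τ.length ≤ H)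
    (σ : β) (hσ : ∀ τ ∈ S, σ ∈ τ.map φ) :
    (CoreAbs φ S).Nonempty := by
  classical
  set P : List β → Prop := fun u => ∀ τ ∈ S, u.Sublist (τ.map φ) with hP
  have hP1 : P [σ] := fun τ hτ => List.singleton_sublist.mpr (hσ τ hτ)
  obtain ⟨τ₀, hτ₀⟩ := hS
  have hbound : ∀ u, P u → u.length ≤ H := by
    intro u hu
    calc u.length ≤ (τ₀.map φ).length := (hu τ₀ hτ₀).length_le
    _ = τ₀.length := by simp
    _ ≤ H := hlen τ₀ hτ₀
  set Q : ℕ → Prop := fun n => ∃ u, P u ∧ u.length = n with hQ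
  have hH1 : 1 ≤ H := hbound [σ] hP1
  set N := Nat.findGreatest Q H with hN
  have hQN : Q N := Nat.findGreatest_spec hH1 ⟨[σ], hP1, rfl⟩
  obtain ⟨u, hu, hulen⟩ := hQN
  refine ⟨u, hu, ?_⟩
  intro v hv hsub
  have hvN : v.length ≤ N := by
    by_contra h
    push_neg at h
    exact Nat.findGreatest_is_greatest h (hbound v hv) ⟨v, hv, rfl⟩
  exact hsub.eq_of_length (le_antisymm hsub.length_le (hulen ▸ hvN))
end

section
/- Let Σ be a type, g ∈ Σ, and let S be a nonempty set of lists over Σ such that g is a member of every list τ ∈ S. Then some element of Core(S) contains g: there exists u ∈ Core(S) with g ∈ u. -/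
/-- `u` is a common subsequence of the set of lists `S`:
`u ⪯ τ` (in the `List.Sublist` sense) for every `τ ∈ S`. -/
def IsCommonSubseq {α : Type*} (S : Set (List α)) (u : List α) : Prop :=
  ∀ τ ∈ S, u.Sublist τ

/-- `Core S` is the set of `⪯`-maximal common subsequences of `S`. -/
def Core {α : Type*} (S : Set (List α)) : Set (List α) :=
  {u | IsCommonSubseq S u ∧ ∀ v, IsCommonSubseq S v → u.Sublist v → u = v}

/-- If the goal symbol `g` belongs to every list of a nonempty set `S`, then
some element of `Core S` contains `g`. -/
theorem core_contains_goal {α : Type*} (g : α) (S : Set (List α)) (hS : S.Nonempty)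
    (hg : ∀ τ ∈ S, g ∈ τ) :
    ∃ u ∈ Core S, g ∈ u := by
  obtain ⟨τ₀, hτ₀⟩ := hS
  set T : Set ℕ := {n | ∃ u, IsCommonSubseq S u ∧ g ∈ u ∧ u.length = n} with hT
  have hT1 : (1 : ℕ) ∈ T := by
    refine ⟨[g], fun τ hτ => ?_, List.mem_singleton_self g, rfl⟩
    exact List.singleton_sublist.mpr (hg τ hτ)
  have hbdd : BddAbove T := by
    refine ⟨τ₀.length, fun n hn => ?_⟩
    obtain ⟨u, hu, -, rfl⟩ := hn
    exact (hu τ₀ hτ₀).length_le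
  have hmem : sSup T ∈ T := Nat.sSup_mem ⟨1, hT1⟩ hbdd
  obtain ⟨u, hu, hgu, hlen⟩ := hmem
  refine ⟨u, ⟨hu, fun v hv huv => ?_⟩, hgu⟩
  have hvT : v.length ∈ T := ⟨v, hv, huv.subset hgu, rfl⟩
  have : v.length ≤ u.length := hlen ▸ le_csSup hbdd hvT
  exact huv.eq_of_length_le this
end

section
/- There exist a type Σ, a symbol g ∈ Σ, a horizon H, nonempty finite sets S and S' of lists over Σ each of length at most H with g a member of every list in S and of every list in S', and a list u, such that u ∈ Core(S) but u ∉ Core(S'); moreover S and S' can be chosen so that Core(S) ∩ Core(S') ⊆ {[g]}. -/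

lemma Core_singleton {α : Type*} (τ : List α) : Core {τ} = {τ} := by
  ext u
  constructor
  · rintro ⟨h1, h2⟩
    exact h2 τ (fun t ht => by simp_all) (h1 τ rfl)
  · rintro rfl
    refine ⟨fun t ht => by simp_all, fun v hv hsub => ?_⟩
    exact hsub.antisymm (hv _ rfl)

/-- Proposition 1 (episode-to-episode core drift), combinatorial content:
there exist an alphabet, a goal symbol `g`, a horizon `H`, and two nonempty
finite success sets `S` and `S'` of lists of length at most `H`, each list
containing `g`, together with a prototype `u` that lies in `Core S` but not in
`Core S'`; moreover the two cores overlap in at most the trivial terminal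
prototype `[g]`. -/
theorem core_drift_example :
    ∃ (α : Type) (g : α) (H : ℕ) (S S' : Set (List α)) (u : List α),
      S.Nonempty ∧ S'.Nonempty ∧ S.Finite ∧ S'.Finite ∧
      (∀ τ ∈ S, τ.length ≤ H) ∧ (∀ τ ∈ S', τ.length ≤ H) ∧
      (∀ τ ∈ S, g ∈ τ) ∧ (∀ τ ∈ S', g ∈ τ) ∧
      u ∈ Core S ∧ u ∉ Core S' ∧
      Core S ∩ Core S' ⊆ {[g]} := by
  refine ⟨ℕ, 0, 2, {[1,0]}, {[2,0]}, [1,0], ⟨_, rfl⟩, ⟨_, rfl⟩,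
    Set.finite_singleton _, Set.finite_singleton _, ?_, ?_, ?_, ?_, ?_, ?_, ?_⟩
  · rintro τ rfl; simp
  · rintro τ rfl; simp
  · rintro τ rfl; simp
  · rintro τ rfl; simp
  · rw [Core_singleton]; rfl
  · rw [Core_singleton]; simp
  · rw [Core_singleton, Core_singleton]; simp
end
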